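/- Fix a constant C > 0 and for j ≥ 2, m ≥ 2j, j ≤ l ≤ m − j, define c_{j,m,l} = Σ ∏_{i=1}^{j} (κ_{m_i}/m_i!) C(m_i, l_i), where the sum is over tuples (m_1,...,m_j) with m_i ≥ 2 and Σm_i = m, and tuples (l_1,...,l_j) with 1 ≤ l_i ≤ m_i − 1 and Σl_i = l. If |κ_m|/m! ≤ C^m for all m ≥ 2, then |c_{j,m,l}| ≤ (2C)^m · C(m − j − 1, j − 1). -/

import Mathlib

/-!
Bounding each `|κ_{m_i}| / m_i!` by `C ^ m_i` reduces the inner sum over `(l_i)` to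
`C ^ m` times a sum of products of binomial coefficients, which is at most
`∏ i, 2 ^ m_i = 2 ^ m` since it is part of the expansion of `∏ i, (1 + 1) ^ m_i`.
The outer sum runs over compositions of `m` into `j` parts `≥ 2`; subtracting `2` from every
part identifies them with the `(m - j - 1).choose (j - 1)` compositions of `m - 2j` into `j`
parts `≥ 0` (stars and bars).
-/

open Finset

namespace Finset.Nat

theorem card_antidiagonalTuple (k n : ℕ) :
    #(antidiagonalTuple k n) = (k + n - 1).choose n := by
  let e : antidiagonalTuple k n ≃ Sym (Fin k) n :=
    (Equiv.subtypeEquivRight fun _ ↦ mem_antidiagonalTuple).trans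
      (Sym.equivNatSumOfFintype (Fin k) n).symm
  rw [card_eq_of_equiv_fintype e, Sym.card_sym_eq_choose, Fintype.card_fin]

theorem card_filter_le_antidiagonalTuple {k n a : ℕ} (h : k * a ≤ n) :
    #((antidiagonalTuple k n).filter fun f ↦ ∀ i, a ≤ f i) =
      #(antidiagonalTuple k (n - k * a)) := by
  refine card_nbij' (fun f i ↦ f i - a) (fun g i ↦ g i + a) ?_ ?_ ?_ ?_
  · intro f hf
    simp only [coe_filter, Set.mem_ofPred_eq, mem_antidiagonalTuple] at hf
    simp only [mem_coe, mem_antidiagonalTuple]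
    rw [sum_tsub_distrib _ fun i _ ↦ hf.2 i, hf.1]
    simp
  · intro g hg
    simp only [mem_coe, mem_antidiagonalTuple] at hg
    simp only [coe_filter, Set.mem_ofPred_eq, mem_antidiagonalTuple, sum_add_distrib, hg]
    simp only [sum_const, card_univ, Fintype.card_fin, smul_eq_mul]
    exact ⟨Nat.sub_add_cancel h, fun i ↦ Nat.le_add_left a (g i)⟩
  · intro f hf
    simp only [coe_filter, Set.mem_ofPred_eq] at hf
    funext i
    exact Nat.sub_add_cancel (hf.2 i)
  · intro g _
    simp

theorem card_filter_two_le_antidiagonalTuple {k n : ℕ} (hk : 1 ≤ k) (h : 2 * k ≤ n) :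
    #((antidiagonalTuple k n).filter fun f ↦ ∀ i, 2 ≤ f i) = (n - k - 1).choose (k - 1) := by
  rw [card_filter_le_antidiagonalTuple (by omega), card_antidiagonalTuple,
    show k + (n - k * 2) - 1 = n - k - 1 by omega]
  exact Nat.choose_symm_of_eq_add (by omega) |>.symm

end Finset.Nat

theorem sum_prod_choose_le_two_pow {ι : Type*} [Fintype ι] [DecidableEq ι] (f : ι → ℕ)
    (s : Finset (ι → ℕ)) :
    ∑ g ∈ s, ∏ i, (f i).choose (g i) ≤ 2 ^ ∑ i, f i := by
  calc ∑ g ∈ s, ∏ i, (f i).choose (g i)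
      ≤ ∑ g ∈ Fintype.piFinset fun i ↦ range (f i + 1), ∏ i, (f i).choose (g i) := by
        refine sum_le_sum_of_ne_zero fun g _ hg ↦ Fintype.mem_piFinset.2 fun i ↦ ?_
        have := prod_ne_zero_iff.1 hg i (mem_univ i)
        rw [Ne, Nat.choose_eq_zero_iff, not_lt] at this
        exact mem_range_succ_iff.2 this
    _ = ∏ i, ∑ t ∈ range (f i + 1), (f i).choose t := (prod_univ_sum _ _).symm
    _ = 2 ^ ∑ i, f i := by simp_rw [Nat.sum_range_choose, prod_pow_eq_pow_sum]

theorem abs_sum_prod_mul_choose_le {ι : Type*} [Fintype ι] [DecidableEq ι] {C : ℝ} (hC : 0 ≤ C)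
    (x : ι → ℝ) (f : ι → ℕ) (hx : ∀ i, |x i| ≤ C ^ f i) (s : Finset (ι → ℕ)) :
    |∑ g ∈ s, ∏ i, x i * (f i).choose (g i)| ≤ (2 * C) ^ ∑ i, f i := by
  calc |∑ g ∈ s, ∏ i, x i * (f i).choose (g i)|
      ≤ ∑ g ∈ s, ∏ i, C ^ f i * (f i).choose (g i) := by
        refine (abs_sum_le_sum_abs _ _).trans (sum_le_sum fun g _ ↦ ?_)
        rw [abs_prod]
        refine prod_le_prod (fun i _ ↦ abs_nonneg _) fun i _ ↦ ?_
        rw [abs_mul, Nat.abs_cast]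
        exact mul_le_mul_of_nonneg_right (hx i) (Nat.cast_nonneg _)
    _ = C ^ (∑ i, f i) * ((∑ g ∈ s, ∏ i, (f i).choose (g i) : ℕ) : ℝ) := by
        simp [prod_mul_distrib, prod_pow_eq_pow_sum, mul_sum]
    _ ≤ C ^ (∑ i, f i) * 2 ^ ∑ i, f i := by
        gcongr
        exact_mod_cast sum_prod_choose_le_two_pow f s
    _ = (2 * C) ^ ∑ i, f i := by rw [mul_pow, mul_comm]

theorem stmt_9_general (κ : ℕ → ℝ) (C : ℝ) (hC : 0 < C)
    (hb : ∀ m, 2 ≤ m → |κ m| / (Nat.factorial m : ℝ) ≤ C ^ m)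
    (j m l : ℕ) (hj : 2 ≤ j) (hm : 2 * j ≤ m)
    (c : ℝ)
    (hc : c = ∑ f ∈ (Finset.Nat.antidiagonalTuple j m).filter (fun f => ∀ i, 2 ≤ f i),
        ∑ g ∈ (Finset.Nat.antidiagonalTuple j l).filter
            (fun g => ∀ i, 1 ≤ g i ∧ g i ≤ f i - 1),
          ∏ i, (κ (f i) / (Nat.factorial (f i) : ℝ) * (Nat.choose (f i) (g i) : ℝ))) :
    |c| ≤ (2 * C) ^ m * (Nat.choose (m - j - 1) (j - 1) : ℝ) := by
  set S := (Finset.Nat.antidiagonalTuple j m).filter (fun f => ∀ i, 2 ≤ f i)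
  have h_inner : ∀ f ∈ S, |∑ g ∈ (Finset.Nat.antidiagonalTuple j l).filter
      (fun g => ∀ i, 1 ≤ g i ∧ g i ≤ f i - 1),
        ∏ i, (κ (f i) / (Nat.factorial (f i) : ℝ) * (Nat.choose (f i) (g i) : ℝ))|
      ≤ (2 * C) ^ m := by
    intro f hf
    obtain ⟨hf_sum, hf_two⟩ := mem_filter.1 hf
    rw [← Finset.Nat.mem_antidiagonalTuple.1 hf_sum]
    refine abs_sum_prod_mul_choose_le hC.le _ f (fun i ↦ ?_) _
    rw [abs_div, Nat.abs_cast]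
    exact hb _ (hf_two i)
  calc |c| ≤ #S • (2 * C) ^ m :=
        hc ▸ (abs_sum_le_sum_abs _ _).trans (sum_le_card_nsmul _ _ _ h_inner)
    _ = (2 * C) ^ m * (Nat.choose (m - j - 1) (j - 1) : ℝ) := by
      rw [Finset.Nat.card_filter_two_le_antidiagonalTuple (by omega) hm, nsmul_eq_mul, mul_comm]

theorem stmt_9 (κ : ℕ → ℝ) (C : ℝ) (hC : 0 < C)
    (hb : ∀ m, 2 ≤ m → |κ m| / (Nat.factorial m : ℝ) ≤ C ^ m)
    (j m l : ℕ) (hj : 2 ≤ j) (hm : 2 * j ≤ m) (hl1 : j ≤ l) (hl2 : l ≤ m - j)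
    (c : ℝ)
    (hc : c = ∑ f ∈ (Finset.Nat.antidiagonalTuple j m).filter (fun f => ∀ i, 2 ≤ f i),
        ∑ g ∈ (Finset.Nat.antidiagonalTuple j l).filter
            (fun g => ∀ i, 1 ≤ g i ∧ g i ≤ f i - 1),
          ∏ i, (κ (f i) / (Nat.factorial (f i) : ℝ) * (Nat.choose (f i) (g i) : ℝ))) :
    |c| ≤ (2 * C) ^ m * (Nat.choose (m - j - 1) (j - 1) : ℝ) :=
  stmt_9_general κ C hC hb j m l hj hm c hc
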